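/- arXiv:2111.02183 — 2 statements merged into one kernel-verified Lean document; each statement's English description precedes it below -/
import Mathlib

section
/- Let k be a natural number, let p₁,…,p_k be distinct primes and n = p₁⋯p_k, and let u, v be positive divisors of n. Then the distance between u and v in the k-dprime divisor function graph Γ_k is 0 if u = v, is 1 if u and v are adjacent, and is 2 otherwise. -/
/-- The `k`-dprime divisor function graph on the positive divisors of `n`:
two distinct divisors `u`, `v` are adjacent iff `u ∣ v` or `v ∣ u`. -/
def divisorGraph (n : ℕ) : SimpleGraph {d : ℕ // d ∈ n.divisors} where
  Adj u v := u ≠ v ∧ ((u : ℕ) ∣ (v : ℕ) ∨ (v : ℕ) ∣ (u : ℕ))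
  symm := ⟨fun _ _ ⟨h, hd⟩ => ⟨h.symm, hd.symm⟩⟩
  loopless := ⟨fun _ ⟨h, _⟩ => h rfl⟩

instance (n : ℕ) : DecidableRel (divisorGraph n).Adj :=
  fun u v => inferInstanceAs (Decidable (u ≠ v ∧ ((u : ℕ) ∣ (v : ℕ) ∨ (v : ℕ) ∣ (u : ℕ))))

/-! The divisor `1` is adjacent to every other divisor, so any two distinct non-adjacent
divisors are joined by the path `u — 1 — v` of length two. -/

namespace SimpleGraph

variable {V : Type*} {G : SimpleGraph V} {c u v : V}

theorem dist_eq_two_of_forall_adj (hc : ∀ w, w ≠ c → G.Adj c w) (huv : u ≠ v)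
    (hadj : ¬G.Adj u v) : G.dist u v = 2 := by
  have huc : u ≠ c := by rintro rfl; exact hadj (hc v huv.symm)
  have hvc : v ≠ c := by rintro rfl; exact hadj (hc u huv).symm
  let path : G.Walk u v := ((hc u huc).symm.toWalk).append (hc v hvc).toWalk
  have hle : G.dist u v ≤ 2 := by simpa [path] using dist_le path
  have hpos : 0 < G.dist u v := Reachable.pos_dist_of_ne ⟨path⟩ huv
  have hne : G.dist u v ≠ 1 := fun h => hadj (dist_eq_one_iff_adj.mp h)
  omega

end SimpleGraph

theorem divisorGraph_one_adj {n : ℕ} (h1 : 1 ∈ n.divisors) (d : {d : ℕ // d ∈ n.divisors})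
    (hd : d ≠ ⟨1, h1⟩) : (divisorGraph n).Adj ⟨1, h1⟩ d :=
  ⟨hd.symm, Or.inl (one_dvd _)⟩

theorem stmt_5_general (n : ℕ)
    (u v : ℕ) (hu : u ∈ n.divisors) (hv : v ∈ n.divisors) :
    (divisorGraph n).dist ⟨u, hu⟩ ⟨v, hv⟩ =
      if u = v then 0
      else if (divisorGraph n).Adj ⟨u, hu⟩ ⟨v, hv⟩ then 1
      else 2 := by
  have h1 : 1 ∈ n.divisors := Nat.one_mem_divisors.mpr (Nat.ne_zero_of_mem_divisors hu)
  split_ifs with huv hadj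
  · subst huv
    exact SimpleGraph.dist_self
  · exact SimpleGraph.dist_eq_one_iff_adj.mpr hadj
  · exact SimpleGraph.dist_eq_two_of_forall_adj (divisorGraph_one_adj h1)
      (fun h => huv (congrArg Subtype.val h)) hadj

theorem stmt_5 (k : ℕ) (p : Fin k → ℕ) (hp : ∀ i, (p i).Prime)
    (hinj : Function.Injective p) (n : ℕ) (hn : n = ∏ i, p i)
    (u v : ℕ) (hu : u ∈ n.divisors) (hv : v ∈ n.divisors) :
    (divisorGraph n).dist ⟨u, hu⟩ ⟨v, hv⟩ =
      if u = v then 0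
      else if (divisorGraph n).Adj ⟨u, hu⟩ ⟨v, hv⟩ then 1
      else 2 :=
  stmt_5_general n u v hu hv
end

section
/- Let p, q, r be distinct primes and n = pqr. Then the Randić index of the 3-dprime divisor function graph Γ₃ equals (23 + 12√7)/14, as a real number. -/
/-!
Because `p * q * r` is squarefree, a divisor is determined by the set of primes dividing it, and
divisibility becomes inclusion. So `Γ₃` is the comparability graph of the subsets of a three-element
set: `∅` and the full set have degree 7, the six other subsets degree 4. Of its 19 edges, one joins
two vertices of degree 7, twelve join degree 7 to degree 4 and six join two vertices of degree 4,
giving `1/7 + 12/(2√7) + 6/4 = (23 + 12√7)/14`.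
-/

open SimpleGraph Finset

section Randic

variable {V W : Type*} [Fintype V] [Fintype W] (G : SimpleGraph V) [DecidableRel G.Adj]
  {H : SimpleGraph W} [DecidableRel H.Adj]

def edgeDegreeProduct : Sym2 V → ℕ :=
  Sym2.lift ⟨fun u v => G.degree u * G.degree v, fun _ _ => Nat.mul_comm _ _⟩

theorem edgeDegreeProduct_map (φ : G ≃g H) (e : Sym2 V) :
    edgeDegreeProduct H (e.map φ) = edgeDegreeProduct G e := by
  induction e with
  | _ u v => simp [edgeDegreeProduct]

noncomputable def randicIndex : ℝ :=
  ∑ e ∈ G.edgeFinset, Sym2.lift ⟨fun u v => (1 : ℝ) / √((G.degree u : ℝ) * (G.degree v : ℝ)),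
    fun _ _ => by dsimp only; rw [mul_comm]⟩ e

theorem randicIndex_eq_sum_edgeDegreeProduct :
    randicIndex G = ∑ e ∈ G.edgeFinset, (1 : ℝ) / √(edgeDegreeProduct G e) := by
  refine Finset.sum_congr rfl fun e _ => ?_
  induction e with
  | _ u v => simp [edgeDegreeProduct]

theorem randicIndex_eq_sum_image :
    randicIndex G = ∑ k ∈ G.edgeFinset.image (edgeDegreeProduct G),
      (#{e ∈ G.edgeFinset | edgeDegreeProduct G e = k} : ℝ) / √k := by
  simp_rw [randicIndex_eq_sum_edgeDegreeProduct, Finset.sum_comp (fun k : ℕ => (1 : ℝ) / √k),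
    nsmul_eq_mul, mul_one_div]

variable {G}

theorem randicIndex_congr (φ : G ≃g H) : randicIndex G = randicIndex H := by
  simp_rw [randicIndex_eq_sum_edgeDegreeProduct]
  refine Finset.sum_nbij' (Sym2.map φ) (Sym2.map φ.symm) ?_ ?_ ?_ ?_ ?_
  · simp [φ.map_mem_edgeSet_iff]
  · simp [φ.symm.map_mem_edgeSet_iff]
  · simp [Sym2.map_map]
  · simp [Sym2.map_map]
  · simp [edgeDegreeProduct_map]

end Randic

def SimpleGraph.fromRelCongr {V W : Type*} {r : V → V → Prop} {s : W → W → Prop} (e : V ≃ W)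
    (h : ∀ a b, s (e a) (e b) ↔ r a b) : fromRel r ≃g fromRel s :=
  ⟨e, by simp [h, e.injective.ne_iff]⟩

abbrev finsetComparabilityGraph (ι : Type*) : SimpleGraph (Finset ι) :=
  fromRel (· ⊆ ·)

namespace Nat

variable {ι : Type*} {f : ι ↪ ℕ}

theorem prod_map_id_eq_prod_embedding (s : Finset ι) : ∏ p ∈ s.map f, p = ∏ i ∈ s, f i :=
  Finset.prod_map s f id

theorem primeFactors_prod_embedding (hf : ∀ i, (f i).Prime) (s : Finset ι) :
    (∏ i ∈ s, f i).primeFactors = s.map f := by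
  rw [← prod_map_id_eq_prod_embedding]
  exact primeFactors_prod (by simpa using fun i _ => hf i)

theorem prod_embedding_ne_zero (hf : ∀ i, (f i).Prime) (s : Finset ι) : ∏ i ∈ s, f i ≠ 0 :=
  Finset.prod_ne_zero_iff.2 fun i _ => (hf i).ne_zero

theorem prod_embedding_dvd_prod_embedding_iff (hf : ∀ i, (f i).Prime) {s t : Finset ι} :
    ∏ i ∈ s, f i ∣ ∏ i ∈ t, f i ↔ s ⊆ t := by
  conv_lhs => rw [← prod_map_id_eq_prod_embedding, ← primeFactors_prod_embedding hf]
  rw [prod_primeFactors_dvd_iff (prod_embedding_ne_zero hf t), primeFactors_prod_embedding hf,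
    primeFactors_prod_embedding hf, map_subset_map]

theorem prod_embedding_injective (hf : ∀ i, (f i).Prime) :
    Function.Injective fun s : Finset ι => ∏ i ∈ s, f i := fun _ _ h =>
  ((prod_embedding_dvd_prod_embedding_iff hf).1 h.dvd).antisymm
    ((prod_embedding_dvd_prod_embedding_iff hf).1 h.symm.dvd)

theorem squarefree_prod_embedding (hf : ∀ i, (f i).Prime) (s : Finset ι) :
    Squarefree (∏ i ∈ s, f i) :=
  Finset.squarefree_prod_of_pairwise_isCoprime
    (fun i _ j _ hij =>
      coprime_iff_isRelPrime.1 <| (coprime_primes (hf i) (hf j)).2 (f.injective.ne hij))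
    fun i _ => (hf i).prime.squarefree

theorem exists_prod_embedding_eq_of_dvd (hf : ∀ i, (f i).Prime) {t : Finset ι} {d : ℕ}
    (hd : d ∣ ∏ i ∈ t, f i) : ∃ s ⊆ t, ∏ i ∈ s, f i = d := by
  have hsub : d.primeFactors ⊆ t.map f := by
    rw [← primeFactors_prod_embedding hf]
    exact primeFactors_mono hd (prod_embedding_ne_zero hf t)
  obtain ⟨s, hst, hs⟩ := subset_map_iff.1 hsub
  refine ⟨s, hst, ?_⟩
  rw [← prod_map_id_eq_prod_embedding, ← hs]
  exact prod_primeFactors_of_squarefree ((squarefree_prod_embedding hf t).squarefree_of_dvd hd)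

noncomputable def finsetEquivDivisors [Fintype ι] (hf : ∀ i, (f i).Prime) :
    Finset ι ≃ (∏ i, f i).divisors :=
  Equiv.ofBijective
    (fun s => ⟨∏ i ∈ s, f i, mem_divisors.2 ⟨prod_dvd_prod_of_subset _ _ _ (subset_univ s),
      prod_embedding_ne_zero hf _⟩⟩)
    ⟨fun _ _ h => prod_embedding_injective hf (congrArg Subtype.val h), fun d => by
      obtain ⟨s, -, hs⟩ := exists_prod_embedding_eq_of_dvd hf (dvd_of_mem_divisors d.2)
      exact ⟨s, Subtype.ext hs⟩⟩

end Nat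

noncomputable def finsetComparabilityGraphIsoDivisorGraph {ι : Type*} [Fintype ι] {f : ι ↪ ℕ}
    (hf : ∀ i, (f i).Prime) :
    finsetComparabilityGraph ι ≃g divisorGraph (∏ i, f i) :=
  fromRelCongr (Nat.finsetEquivDivisors hf) fun _ _ =>
    Nat.prod_embedding_dvd_prod_embedding_iff hf

theorem randicIndex_finsetComparabilityGraph_fin_three :
    randicIndex (finsetComparabilityGraph (Fin 3)) = (23 + 12 * √7) / 14 := by
  have himage : (finsetComparabilityGraph (Fin 3)).edgeFinset.image
      (edgeDegreeProduct (finsetComparabilityGraph (Fin 3))) = {16, 28, 49} := by decide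
  have h16 : #{e ∈ (finsetComparabilityGraph (Fin 3)).edgeFinset |
      edgeDegreeProduct (finsetComparabilityGraph (Fin 3)) e = 16} = 6 := by decide
  have h28 : #{e ∈ (finsetComparabilityGraph (Fin 3)).edgeFinset |
      edgeDegreeProduct (finsetComparabilityGraph (Fin 3)) e = 28} = 12 := by decide
  have h49 : #{e ∈ (finsetComparabilityGraph (Fin 3)).edgeFinset |
      edgeDegreeProduct (finsetComparabilityGraph (Fin 3)) e = 49} = 1 := by decide
  have hsqrt16 : √((16 : ℕ) : ℝ) = 4 := by
    rw [show ((16 : ℕ) : ℝ) = 4 ^ 2 by norm_num, Real.sqrt_sq (by norm_num)]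
  have hsqrt28 : √((28 : ℕ) : ℝ) = 2 * √7 := by
    rw [show ((28 : ℕ) : ℝ) = 2 ^ 2 * 7 by norm_num, Real.sqrt_mul (by norm_num),
      Real.sqrt_sq (by norm_num)]
  have hsqrt49 : √((49 : ℕ) : ℝ) = 7 := by
    rw [show ((49 : ℕ) : ℝ) = 7 ^ 2 by norm_num, Real.sqrt_sq (by norm_num)]
  rw [randicIndex_eq_sum_image, himage, sum_insert (by decide), sum_insert (by decide),
    sum_singleton, h16, h28, h49, hsqrt16, hsqrt28, hsqrt49]
  have h7 : √7 ^ 2 = 7 := Real.sq_sqrt (by norm_num)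
  field_simp
  linear_combination -672 * h7

/-- The Randić index of `Γ₃`: the sum over all edges of `1 / √(deg u · deg v)`. -/
theorem stmt_15 (p q r : ℕ) (hp : p.Prime) (hq : q.Prime) (hr : r.Prime)
    (hpq : p ≠ q) (hpr : p ≠ r) (hqr : q ≠ r) (n : ℕ) (hn : n = p * q * r) :
    ∑ e ∈ (divisorGraph n).edgeFinset,
      Sym2.lift ⟨fun u v =>
          (1 : ℝ) / Real.sqrt (((divisorGraph n).degree u : ℝ) * ((divisorGraph n).degree v : ℝ)),
        fun u v => by beta_reduce; rw [mul_comm (((divisorGraph n).degree u : ℝ))]⟩ e =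
      (23 + 12 * Real.sqrt 7) / 14 := by
  let f : Fin 3 ↪ ℕ := ⟨![p, q, r], by
    intro i j; fin_cases i <;> fin_cases j <;> simp [hpq, hpr, hqr, hpq.symm, hpr.symm, hqr.symm]⟩
  have hf : ∀ i, (f i).Prime := by
    intro i; fin_cases i <;> assumption
  obtain rfl : n = ∏ i, f i := by rw [hn, Fin.prod_univ_three]; rfl
  show randicIndex (divisorGraph (∏ i, f i)) = _
  rw [← randicIndex_congr (finsetComparabilityGraphIsoDivisorGraph hf),
    randicIndex_finsetComparabilityGraph_fin_three]
end
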